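/- Let n > 3 and let S₁, S₂ ⊆ 𝔽₂ⁿ be powerful sets each of cardinality 2^{n-2}. Then S₁ ◇ S₂ is not a linear subspace of 𝔽₂^{n+3}. -/

import Mathlib

/-- A finite set `S` of vectors in `𝔽₂ⁿ` is *powerful* if for every subset `X` of the
coordinate positions, the number of vectors in `S` that are zero at every position in `X`
is a power of 2. -/
def IsPowerful {n : ℕ} (S : Finset (Fin n → ZMod 2)) : Prop :=
  ∀ X : Finset (Fin n), ∃ d : ℕ, (S.filter (fun v => ∀ i ∈ X, v i = 0)).card = 2 ^ d

/-- The loop extension `T+∘ ⊆ 𝔽₂^{n+1}`: append a new last coordinate `0` to every vector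
of `T`. -/
def loopExt {n : ℕ} (T : Finset (Fin n → ZMod 2)) : Finset (Fin (n + 1) → ZMod 2) :=
  T.image (fun v => Fin.snoc v 0)

/-- The framing `T+□ ⊆ 𝔽₂^{n+1}`: the zero vector of length `n+1` together with every
nonzero vector of `T` extended by a new last coordinate equal to `1`. -/
def framing {n : ℕ} (T : Finset (Fin n → ZMod 2)) : Finset (Fin (n + 1) → ZMod 2) :=
  insert 0 ((T.filter (fun v => v ≠ 0)).image (fun v => Fin.snoc v 1))

/-- The combination `Q•R ⊆ 𝔽₂^{n+2}`:
`{v00 : v ∈ Q ∩ R} ∪ {v01 : v ∈ Q ∖ R} ∪ {v10 : v ∈ R ∖ Q} ∪ {v11 : v ∉ Q ∪ R}`. -/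
def bulletComb {n : ℕ} (Q R : Finset (Fin n → ZMod 2)) : Finset (Fin (n + 2) → ZMod 2) :=
  ((Q ∩ R).image (fun v => Fin.append v ![0, 0])) ∪
  ((Q \ R).image (fun v => Fin.append v ![0, 1])) ∪
  ((R \ Q).image (fun v => Fin.append v ![1, 0])) ∪
  (((Q ∪ R)ᶜ).image (fun v => Fin.append v ![1, 1]))

/-- A set `S ⊆ 𝔽₂ⁿ` is *linear* if it is the underlying set of a linear subspace over `𝔽₂`. -/
def IsLinear {n : ℕ} (S : Finset (Fin n → ZMod 2)) : Prop :=
  ∃ W : Submodule (ZMod 2) (Fin n → ZMod 2), (S : Set (Fin n → ZMod 2)) = W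

/-! For `Q, R ⊆ 𝔽₂^m` with `Q • R` a subspace, the sum of two vectors of `Q • R` ending in `11`
ends in `00`, so translating `(Q ∪ R)ᶜ` by one of its elements lands in `Q ∩ R`. Hence
`2 ^ m = #(Q ∪ R) + #(Q ∪ R)ᶜ ≤ #(Q ∪ R) + #(Q ∩ R) = #Q + #R`. For `Q = S₁+∘` and `R = S₂+□`
the right-hand side is at most `2 ^ (n - 1) + 1 < 2 ^ (n + 1)`. -/

section Append

variable {α : Type*} {m k : ℕ}

theorem Fin.append_inj_iff {a a' : Fin m → α} {b b' : Fin k → α} :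
    Fin.append a b = Fin.append a' b' ↔ a = a' ∧ b = b' :=
  (Fin.appendEquiv m k).injective.eq_iff.trans Prod.mk_inj

theorem Fin.append_add_append [Add α] (a a' : Fin m → α) (b b' : Fin k → α) :
    Fin.append a b + Fin.append a' b' = Fin.append (a + a') (b + b') := by
  funext i
  refine Fin.addCases (fun i => ?_) (fun i => ?_) i <;> simp

end Append

section BulletComb

variable {m : ℕ} {Q R : Finset (Fin m → ZMod 2)}

theorem append_zero_zero_mem_bulletComb_iff {v : Fin m → ZMod 2} :
    Fin.append v ![0, 0] ∈ bulletComb Q R ↔ v ∈ Q ∩ R := by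
  simp [bulletComb, Fin.append_inj_iff]

theorem append_one_one_mem_bulletComb {v : Fin m → ZMod 2} (hv : v ∈ (Q ∪ R)ᶜ) :
    Fin.append v ![1, 1] ∈ bulletComb Q R :=
  Finset.mem_union_right _ (Finset.mem_image_of_mem _ hv)

theorem IsLinear.add_mem_inter_of_mem_compl_union (hlin : IsLinear (bulletComb Q R))
    {c c' : Fin m → ZMod 2} (hc : c ∈ (Q ∪ R)ᶜ) (hc' : c' ∈ (Q ∪ R)ᶜ) : c + c' ∈ Q ∩ R := by
  obtain ⟨W, hW⟩ := hlin
  have hmem : ∀ {v}, v ∈ bulletComb Q R ↔ v ∈ W := fun {v} => by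
    rw [← Finset.mem_coe, hW, SetLike.mem_coe]
  have hsum := W.add_mem (hmem.mp (append_one_one_mem_bulletComb hc))
    (hmem.mp (append_one_one_mem_bulletComb hc'))
  rw [Fin.append_add_append, show ![(1 : ZMod 2), 1] + ![1, 1] = ![0, 0] by decide] at hsum
  exact append_zero_zero_mem_bulletComb_iff.mp (hmem.mpr hsum)

theorem IsLinear.card_compl_union_le (hlin : IsLinear (bulletComb Q R)) :
    ((Q ∪ R)ᶜ).card ≤ (Q ∩ R).card := by
  obtain h | ⟨c, hc⟩ := ((Q ∪ R)ᶜ).eq_empty_or_nonempty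
  · simp [h]
  calc ((Q ∪ R)ᶜ).card = (((Q ∪ R)ᶜ).image (c + ·)).card :=
        (Finset.card_image_of_injective _ (add_right_injective c)).symm
    _ ≤ (Q ∩ R).card := Finset.card_le_card <| Finset.image_subset_iff.mpr
        fun _ hc' => hlin.add_mem_inter_of_mem_compl_union hc hc'

theorem IsLinear.two_pow_le_card_add_card (hlin : IsLinear (bulletComb Q R)) :
    2 ^ m ≤ Q.card + R.card := by
  have hcompl := hlin.card_compl_union_le
  have hunion := Finset.card_le_univ (Q ∪ R)
  simp only [Finset.card_compl, Fintype.card_fun, ZMod.card, Fintype.card_fin] at hcompl hunion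
  have := Finset.card_union_add_card_inter Q R
  omega

end BulletComb

theorem card_loopExt {n : ℕ} (T : Finset (Fin n → ZMod 2)) : (loopExt T).card = T.card :=
  Finset.card_image_of_injective _ fun _ _ h => (Fin.snoc_injective2 h).1

theorem card_framing_le {n : ℕ} (T : Finset (Fin n → ZMod 2)) :
    (framing T).card ≤ T.card + 1 :=
  (Finset.card_insert_le _ _).trans <| Nat.add_le_add_right
    (Finset.card_image_le.trans (Finset.card_filter_le _ _)) 1

theorem diamond_nonlinear_general {n : ℕ} (hn : 3 < n) (S₁ S₂ : Finset (Fin n → ZMod 2))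
    (hc₁ : S₁.card = 2 ^ (n - 2)) (hc₂ : S₂.card = 2 ^ (n - 2)) :
    ¬ IsLinear (bulletComb (loopExt S₁) (framing S₂)) := by
  intro hlin
  have hcard := hlin.two_pow_le_card_add_card
  have hframing := card_framing_le S₂
  rw [card_loopExt, hc₁] at hcard
  obtain ⟨k, rfl⟩ : ∃ k, n = k + 2 := ⟨n - 2, by omega⟩
  rw [Nat.add_sub_cancel] at hcard hc₂
  have hpow : 2 ^ (k + 2 + 1) = 8 * 2 ^ k := by ring
  have := Nat.one_le_two_pow (n := k)
  omega

/-- For `n > 3` and powerful sets `S₁, S₂ ⊆ 𝔽₂ⁿ` each of cardinality `2^{n-2}`,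
`S₁ ◇ S₂ = (S₁+∘) • (S₂+□)` is not linear. -/
theorem diamond_nonlinear {n : ℕ} (hn : 3 < n) (S₁ S₂ : Finset (Fin n → ZMod 2))
    (h₁ : IsPowerful S₁) (h₂ : IsPowerful S₂)
    (hc₁ : S₁.card = 2 ^ (n - 2)) (hc₂ : S₂.card = 2 ^ (n - 2)) :
    ¬ IsLinear (bulletComb (loopExt S₁) (framing S₂)) :=
  diamond_nonlinear_general hn S₁ S₂ hc₁ hc₂
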